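/- arXiv:1111.3013 — 8 statements merged into one kernel-verified Lean document; each statement's English description precedes it below -/
import Mathlib

section
/- Let X and Z be finite sets and let M : X → Z → ℝ be a channel matrix all of whose entries are strictly positive, and suppose every two distinct elements of X are adjacent (the adjacency graph on X is a clique). Then for ε > 0 the following are equivalent: (i) M x z ≤ exp(ε) · M x' z for all distinct x, x' ∈ X and all z ∈ Z; (ii) for every probability distribution p on X, every x ∈ X and every z ∈ Z, exp(−ε) · p(x) ≤ (p(x) · M x z) / (∑_{x' ∈ X} p(x') · M x' z) ≤ exp(ε) · p(x). -/
/-- For a channel matrix with strictly positive entries on a clique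
(every two distinct inputs are adjacent), `ε`-differential privacy is equivalent to the
statement that for every prior the Bayesian posterior of each input differs from the prior
by a multiplicative factor of at most `exp ε`. -/
theorem dp_iff_posterior_bound {X Z : Type*} [Fintype X] [Fintype Z]
    (M : X → Z → ℝ) (hpos : ∀ x z, 0 < M x z)
    (hrow : ∀ x, ∑ z, M x z = 1) (ε : ℝ) (hε : 0 < ε) :
    (∀ x x' : X, x ≠ x' → ∀ z, M x z ≤ Real.exp ε * M x' z) ↔
      (∀ p : X → ℝ, (∀ x, 0 ≤ p x) → (∑ x, p x = 1) →
        ∀ x z,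
          Real.exp (-ε) * p x ≤ (p x * M x z) / (∑ x', p x' * M x' z) ∧
          (p x * M x z) / (∑ x', p x' * M x' z) ≤ Real.exp ε * p x) := by
  classical
  constructor
  · intro hdp p hp hps x z
    set S := ∑ x', p x' * M x' z with hS
    have hexp : (0:ℝ) < Real.exp ε := Real.exp_pos ε
    have hlow : Real.exp (-ε) * M x z ≤ S := by
      have hterm : ∀ x' : X, Real.exp (-ε) * M x z * p x' ≤ p x' * M x' z := by
        intro x'
        rcases eq_or_ne x' x with rfl | hne
        · have h1 : Real.exp (-ε) ≤ 1 := by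
            rw [Real.exp_le_one_iff]; linarith
          nlinarith [mul_nonneg (sub_nonneg.mpr h1)
            (mul_nonneg (hp x') (hpos x' z).le)]
        · have h0 := hdp x x' (Ne.symm hne) z
          have h2 : Real.exp (-ε) * M x z ≤ M x' z := by
            rw [Real.exp_neg, inv_mul_le_iff₀ hexp]
            linarith
          nlinarith [hp x']
      calc Real.exp (-ε) * M x z = ∑ x', Real.exp (-ε) * M x z * p x' := by
            rw [← Finset.mul_sum, hps, mul_one]
        _ ≤ S := Finset.sum_le_sum (fun x' _ => hterm x')
    have hhigh : S ≤ Real.exp ε * M x z := by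
      have hterm : ∀ x' : X, p x' * M x' z ≤ Real.exp ε * M x z * p x' := by
        intro x'
        rcases eq_or_ne x' x with rfl | hne
        · nlinarith [mul_nonneg (sub_nonneg.mpr (Real.one_le_exp hε.le))
            (mul_nonneg (hp x') (hpos x' z).le)]
        · have h0 := hdp x' x hne z
          nlinarith [hp x']
      calc S ≤ ∑ x', Real.exp ε * M x z * p x' :=
            Finset.sum_le_sum (fun x' _ => hterm x')
        _ = Real.exp ε * M x z := by rw [← Finset.mul_sum, hps, mul_one]
    have hSpos : 0 < S :=
      lt_of_lt_of_le (mul_pos (Real.exp_pos _) (hpos x z)) hlow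
    constructor
    · rw [le_div_iff₀ hSpos]
      calc Real.exp (-ε) * p x * S ≤ Real.exp (-ε) * p x * (Real.exp ε * M x z) := by
            have h3 : 0 ≤ Real.exp (-ε) * p x :=
              mul_nonneg (Real.exp_pos _).le (hp x)
            exact mul_le_mul_of_nonneg_left hhigh h3
        _ = p x * M x z := by
            rw [show Real.exp (-ε) * p x * (Real.exp ε * M x z)
                = (Real.exp (-ε) * Real.exp ε) * (p x * M x z) by ring,
              ← Real.exp_add]
            simp
    · rw [div_le_iff₀ hSpos]
      calc p x * M x z = Real.exp ε * p x * (Real.exp (-ε) * M x z) := by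
            rw [show Real.exp ε * p x * (Real.exp (-ε) * M x z)
                = (Real.exp ε * Real.exp (-ε)) * (p x * M x z) by ring,
              ← Real.exp_add]
            simp
        _ ≤ Real.exp ε * p x * S := by
            have h3 : 0 ≤ Real.exp ε * p x :=
              mul_nonneg (Real.exp_pos _).le (hp x)
            exact mul_le_mul_of_nonneg_left hlow h3
  · intro hpost x x' hne z
    have hexp : (0:ℝ) < Real.exp ε := Real.exp_pos ε
    -- for every t ∈ (0,1], use the prior with mass t at x and 1-t at x'
    have key : ∀ t : ℝ, 0 < t → t ≤ 1 →
        M x z ≤ Real.exp ε * (t * M x z + (1 - t) * M x' z) := by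
      intro t ht ht1
      set p : X → ℝ := fun y => if y = x then t else if y = x' then 1 - t else 0
        with hpdef
      have hsplit : ∀ (f : X → ℝ), (∀ y, f y =
          (if y = x then f x else 0) + (if y = x' then f x' else 0)) →
          ∑ y, f y = f x + f x' := by
        intro f hf
        calc ∑ y, f y
            = ∑ y, ((if y = x then f x else 0) + (if y = x' then f x' else 0)) :=
              Finset.sum_congr rfl (fun y _ => hf y)
          _ = f x + f x' := by
              rw [Finset.sum_add_distrib,
                Finset.sum_ite_eq' Finset.univ x (fun _ => f x),
                Finset.sum_ite_eq' Finset.univ x' (fun _ => f x')]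
              simp
      have hp : ∀ y, 0 ≤ p y := by
        intro y; simp only [hpdef]
        split_ifs <;> linarith
      have hpx : p x = t := by simp [hpdef]
      have hpx' : p x' = 1 - t := by simp [hpdef, Ne.symm hne]
      have hps : ∑ y, p y = 1 := by
        have hf : ∀ y, p y = (if y = x then p x else 0) + (if y = x' then p x' else 0) := by
          intro y
          by_cases h1 : y = x
          · subst h1; rw [if_pos rfl, if_neg hne]; ring
          · by_cases h2 : y = x'
            · subst h2; rw [if_neg h1, if_pos rfl]; ring
            · rw [if_neg h1, if_neg h2]
              simp only [hpdef]
              rw [if_neg h1, if_neg h2]; ring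
        rw [hsplit p hf, hpx, hpx']; ring
      have hSsum : ∑ y, p y * M y z = t * M x z + (1 - t) * M x' z := by
        have hf : ∀ y, p y * M y z =
            (if y = x then p x * M x z else 0) + (if y = x' then p x' * M x' z else 0) := by
          intro y
          by_cases h1 : y = x
          · subst h1; rw [if_pos rfl, if_neg hne]; ring
          · by_cases h2 : y = x'
            · subst h2; rw [if_neg h1, if_pos rfl]; ring
            · rw [if_neg h1, if_neg h2]
              have : p y = 0 := by
                simp only [hpdef]; rw [if_neg h1, if_neg h2]
              rw [this]; ring
        rw [hsplit (fun y => p y * M y z) hf, hpx, hpx']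
      have hSp : 0 < t * M x z + (1 - t) * M x' z := by
        nlinarith [hpos x z, hpos x' z]
      have hub := (hpost p hp hps x z).2
      rw [hSsum, hpx, div_le_iff₀ hSp] at hub
      have h4 : t * M x z ≤ t * (Real.exp ε * (t * M x z + (1 - t) * M x' z)) := by
        nlinarith [hub]
      exact le_of_mul_le_mul_left (by linarith [h4]) ht
    -- take t → 0
    refine le_of_forall_pos_le_add ?_
    intro η hη
    set C : ℝ := Real.exp ε * (|M x z| + |M x' z|) + 1 with hC
    have hCpos : 0 < C := by positivity
    set t : ℝ := min 1 (η / C) with htdef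
    have ht : 0 < t := lt_min one_pos (by positivity)
    have ht1 : t ≤ 1 := min_le_left _ _
    have htC : t * C ≤ η := by
      have h5 : t ≤ η / C := min_le_right _ _
      calc t * C ≤ (η / C) * C := by nlinarith
        _ = η := by field_simp
    have h1 := key t ht ht1
    have hb : Real.exp ε * (M x z - M x' z) ≤ C := by
      have := le_abs_self (M x z)
      have := neg_abs_le (M x' z)
      nlinarith
    nlinarith [mul_le_mul_of_nonneg_left hb ht.le]
end

section
/- Let ∼ be an adjacency relation on Fin n, let n ≤ m, let ε > 0, and let M : Fin n → Fin m → ℝ be a channel matrix satisfying ε-differential privacy with respect to ∼. Then there exists a channel matrix M' : Fin n → Fin m → ℝ such that: (i) for every i < n, M' i i = max_{h < n} M' h i (each of the first n columns attains its maximum on the diagonal); (ii) M' i j = 0 for every i < n and every j with n ≤ j < m; (iii) M' satisfies ε-differential privacy with respect to ∼; (iv) ∑_{j < m} max_{i < n} M' i j = ∑_{j < m} max_{i < n} M i j (so, under the uniform input distribution, M' has the same a posteriori min-entropy as M). -/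
/-!
Merge the columns of `M` along a map `g`: column `c` of the new matrix is the sum of the
columns `b` of `M` with `g b = c`. Merging keeps every row stochastic and, being a positive
linear operation on each row, keeps every `ε`-differential-privacy inequality. Send each
column `j` to the diagonal position of a row `f j` maximising it. Then in every merged
column `c` a single row maximises all summands at once, so its maximum is the sum of their
maxima, and the sum of column maxima is unchanged; the columns `≥ n` receive nothing.
-/

open Finset

theorem ciSup_eq_of_forall_le {ι α : Type*} [ConditionallyCompleteLattice α] {f : ι → α}
    (a : ι) (h : ∀ i, f i ≤ f a) : ⨆ i, f i = f a :=
  haveI : Nonempty ι := ⟨a⟩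
  le_antisymm (ciSup_le h) (le_ciSup ⟨f a, Set.forall_mem_range.2 h⟩ a)

section MergeColumns

variable {A B C : Type*} [Fintype B] [DecidableEq C]

def mergeColumns (M : A → B → ℝ) (g : B → C) (i : A) (c : C) : ℝ :=
  ∑ b with g b = c, M i b

variable {M : A → B → ℝ} {g : B → C}

theorem mergeColumns_nonneg (hM : ∀ i b, 0 ≤ M i b) (i : A) (c : C) :
    0 ≤ mergeColumns M g i c :=
  sum_nonneg fun b _ => hM i b

theorem sum_mergeColumns [Fintype C] (i : A) : ∑ c, mergeColumns M g i c = ∑ b, M i b :=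
  sum_fiberwise univ g (M i)

theorem mergeColumns_le_mul {i i' : A} {r : ℝ} (h : ∀ b, M i b ≤ r * M i' b) (c : C) :
    mergeColumns M g i c ≤ r * mergeColumns M g i' c := by
  rw [mergeColumns, mergeColumns, mul_sum]
  exact sum_le_sum fun b _ => h b

theorem mergeColumns_eq_zero {c : C} (hc : c ∉ Set.range g) (i : A) :
    mergeColumns M g i c = 0 :=
  sum_eq_zero fun b hb => absurd ⟨b, (mem_filter.1 hb).2⟩ hc

section CommonArgmax

variable {r : C → A} (hr : ∀ b i, M i b ≤ M (r (g b)) b)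
include hr

theorem mergeColumns_le_of_common_argmax (i : A) (c : C) :
    mergeColumns M g i c ≤ mergeColumns M g (r c) c :=
  sum_le_sum fun b hb => (mem_filter.1 hb).2 ▸ hr b i

theorem ciSup_mergeColumns_of_common_argmax (c : C) :
    ⨆ i, mergeColumns M g i c = ∑ b with g b = c, ⨆ i, M i b := by
  rw [ciSup_eq_of_forall_le (r c) fun i => mergeColumns_le_of_common_argmax hr i c]
  refine sum_congr rfl fun b hb => ?_
  rw [← (mem_filter.1 hb).2, ciSup_eq_of_forall_le _ (hr b)]

theorem sum_ciSup_mergeColumns_of_common_argmax [Fintype C] :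
    ∑ c, ⨆ i, mergeColumns M g i c = ∑ b, ⨆ i, M i b := by
  simp_rw [ciSup_mergeColumns_of_common_argmax hr]
  exact sum_fiberwise univ g _

end CommonArgmax

end MergeColumns

theorem dp_transform_diagonal_general {n m : ℕ} (hnm : n ≤ m)
    (Adj : Fin n → Fin n → Prop) (ε : ℝ)
    (M : Fin n → Fin m → ℝ)
    (hnn : ∀ i j, 0 ≤ M i j) (hrow : ∀ i, ∑ j, M i j = 1)
    (hdp : ∀ i h, Adj i h → ∀ j, M i j ≤ Real.exp ε * M h j) :
    ∃ M' : Fin n → Fin m → ℝ,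
      (∀ i j, 0 ≤ M' i j) ∧
      (∀ i, ∑ j, M' i j = 1) ∧
      (∀ i h : Fin n, M' h (Fin.castLE hnm i) ≤ M' i (Fin.castLE hnm i)) ∧
      (∀ i : Fin n, ∀ j : Fin m, n ≤ (j : ℕ) → M' i j = 0) ∧
      (∀ i h, Adj i h → ∀ j, M' i j ≤ Real.exp ε * M' h j) ∧
      (∑ j, ⨆ i, M' i j) = (∑ j, ⨆ i, M i j) := by
  rcases isEmpty_or_nonempty (Fin n) with _ | _
  · exact ⟨M, hnn, hrow, isEmptyElim, isEmptyElim, hdp, rfl⟩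
  choose f hf using fun j => Finite.exists_max (M · j)
  set e := Fin.castLE hnm
  have hre : ∀ i, Function.invFun e (e i) = i :=
    Function.leftInverse_invFun (Fin.castLE_injective hnm)
  have hr : ∀ j i, M i j ≤ M (Function.invFun e ((e ∘ f) j)) j := fun j i => by
    simpa only [Function.comp_apply, hre] using hf j i
  refine ⟨mergeColumns M (e ∘ f), mergeColumns_nonneg hnn, fun i => ?_, fun i h => ?_,
    fun i j hj => mergeColumns_eq_zero ?_ i, fun i h hih => mergeColumns_le_mul (hdp i h hih),
    sum_ciSup_mergeColumns_of_common_argmax hr⟩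
  · rw [sum_mergeColumns, hrow]
  · simpa only [hre] using mergeColumns_le_of_common_argmax hr h (e i)
  · rintro ⟨k, rfl⟩
    exact hj.not_gt (f k).isLt

/-- **Step 1 of the matrix transformation.** Every `ε`-differentially
private channel matrix with `n` rows and `m ≥ n` columns can be transformed into an
`ε`-differentially private channel matrix whose first `n` columns attain their maxima on
the diagonal, whose last `m - n` columns are identically zero, and which has the same sum
of column maxima (hence the same a posteriori min-entropy under the uniform input
distribution). -/
theorem dp_transform_diagonal {n m : ℕ} (hnm : n ≤ m)
    (Adj : Fin n → Fin n → Prop) (ε : ℝ) (hε : 0 < ε)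
    (M : Fin n → Fin m → ℝ)
    (hnn : ∀ i j, 0 ≤ M i j) (hrow : ∀ i, ∑ j, M i j = 1)
    (hdp : ∀ i h, Adj i h → ∀ j, M i j ≤ Real.exp ε * M h j) :
    ∃ M' : Fin n → Fin m → ℝ,
      (∀ i j, 0 ≤ M' i j) ∧
      (∀ i, ∑ j, M' i j = 1) ∧
      (∀ i h : Fin n, M' h (Fin.castLE hnm i) ≤ M' i (Fin.castLE hnm i)) ∧
      (∀ i : Fin n, ∀ j : Fin m, n ≤ (j : ℕ) → M' i j = 0) ∧
      (∀ i h, Adj i h → ∀ j, M' i j ≤ Real.exp ε * M' h j) ∧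
      (∑ j, ⨆ i, M' i j) = (∑ j, ⨆ i, M i j) :=
  dp_transform_diagonal_general hnm Adj ε M hnn hrow hdp
end

section
/- Let G = (V, ∼) be a connected finite distance-regular graph, let W be a finite set, let ε > 0, and let M' : V → (V ⊕ W) → ℝ be a channel matrix satisfying ε-differential privacy with respect to ∼ such that M' i (inl i) = max_{h ∈ V} M' h (inl i) for every i ∈ V (column maxima on the diagonal) and M' i (inr w) = 0 for all i ∈ V, w ∈ W. Then there exists a channel matrix M'' : V → (V ⊕ W) → ℝ such that: (i) for every i ∈ V, M'' i (inl i) equals the maximum entry of M'' (in particular all diagonal entries are equal to the global maximum); (ii) M'' i (inr w) = 0 for all i ∈ V, w ∈ W; (iii) M'' satisfies ε-differential privacy with respect to ∼; (iv) ∑_{b ∈ V ⊕ W} max_{i ∈ V} M'' i b = ∑_{b ∈ V ⊕ W} max_{i ∈ V} M' i b. -/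
/-- A connected finite graph is distance-regular if there are intersection numbers
`b d` and `c d` such that every vertex `y` at graph distance `d` from `x` has exactly
`b d` neighbors at distance `d + 1` from `x` and exactly `c d` neighbors at distance
`d - 1` from `x`. -/
def IsDistRegular {V : Type*} [Fintype V] (G : SimpleGraph V) : Prop :=
  ∃ b c : ℕ → ℕ, ∀ x y : V, ∀ d : ℕ, G.dist x y = d →
    Nat.card {w : V // G.Adj y w ∧ G.dist x w = d + 1} = b d ∧
    Nat.card {w : V // G.Adj y w ∧ G.dist x w = d - 1} = c d

/-!
Replace the entry in row `i` and column `j` by the mean of all entries `M' x k` with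
`dist k x = dist i j`. In a distance-regular graph the sphere `S_d(k)` of radius `d` has the same
size for every centre `k`, so each row of the new matrix still sums to `1`. Every entry is at most
the diagonal entry of its column, so the mean at distance `0` (the diagonal) is the largest, and
it is the mean of the old diagonal, which keeps the sum of column maxima. For privacy, double
count the edges between `S_d(k)` and `S_(d+1)(k)`: each edge compares two entries of column `k`
within a factor `exp ε`, and `b d * #S_d = c (d + 1) * #S_(d+1)` converts the edge counts into
the sphere sizes by which the means are normalised.
-/

open Finset

lemma ciSup_eq_of_forall_le_apply {ι α : Type*} [Finite ι] [ConditionallyCompleteLattice α]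
    {f : ι → α} {j : ι} (h : ∀ i, f i ≤ f j) : ⨆ i, f i = f j :=
  have : Nonempty ι := ⟨j⟩
  le_antisymm (ciSup_le h) (le_ciSup (Set.finite_range f).bddAbove j)

namespace Finset

variable {α β R : Type*} [CommSemiring R] [PartialOrder R] [IsOrderedRing R]

theorem mul_sum_le_mul_mul_sum_of_bipartite (r : α → β → Prop) [∀ a b, Decidable (r a b)]
    {s : Finset α} {t : Finset β} {m n : ℕ} (hm : ∀ a ∈ s, #(t.bipartiteAbove r a) = m)
    (hn : ∀ b ∈ t, #(s.bipartiteBelow r b) = n) {f : α → R} {g : β → R} {C : R}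
    (hfg : ∀ a ∈ s, ∀ b ∈ t, r a b → f a ≤ C * g b) :
    m * ∑ a ∈ s, f a ≤ C * (n * ∑ b ∈ t, g b) :=
  calc (m : R) * ∑ a ∈ s, f a = ∑ a ∈ s, ∑ _b ∈ t.bipartiteAbove r a, f a := by
        rw [mul_sum]
        exact sum_congr rfl fun a ha => by rw [sum_const, hm a ha, nsmul_eq_mul]
    _ ≤ ∑ a ∈ s, ∑ b ∈ t.bipartiteAbove r a, C * g b :=
        sum_le_sum fun a ha => sum_le_sum fun b hb =>
          hfg a ha b ((mem_bipartiteAbove r).1 hb).1 ((mem_bipartiteAbove r).1 hb).2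
    _ = ∑ b ∈ t, ∑ _a ∈ s.bipartiteBelow r b, C * g b :=
        sum_sum_bipartiteAbove_eq_sum_sum_bipartiteBelow _ _
    _ = C * (n * ∑ b ∈ t, g b) := by
        rw [mul_sum, mul_sum]
        exact sum_congr rfl fun b hb => by rw [sum_const, hn b hb, nsmul_eq_mul, mul_left_comm]

end Finset

namespace SimpleGraph

variable {V : Type*} (G : SimpleGraph V)

def IsDistRegularWith (b c : ℕ → ℕ) : Prop :=
  ∀ x y : V, ∀ d : ℕ, G.dist x y = d →
    Nat.card {w : V // G.Adj y w ∧ G.dist x w = d + 1} = b d ∧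
    Nat.card {w : V // G.Adj y w ∧ G.dist x w = d - 1} = c d

variable {G}

lemma exists_adj_dist_eq_of_dist_eq_succ {x y : V} {d : ℕ} (h : G.dist x y = d + 1) :
    ∃ z, G.Adj y z ∧ G.dist x z = d := by
  have hyx : G.dist y x = d + 1 := by rw [dist_comm, h]
  obtain ⟨p, hp⟩ := exists_walk_of_dist_ne_zero (by omega : G.dist y x ≠ 0)
  cases p with
  | nil => simp only [Walk.length_nil] at hp; omega
  | @cons _ z _ hadj q =>
    refine ⟨z, hadj, ?_⟩
    have hq : G.dist x z ≤ d := by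
      rw [dist_comm]
      exact (dist_le q).trans (by simp only [Walk.length_cons, hyx] at hp; omega)
    rcases hadj.diff_dist_adj (u := x) with e | e | e <;> omega

lemma bipartiteBelow_adj [DecidableRel G.Adj] (s : Finset V) (v : V) :
    s.bipartiteBelow G.Adj v = s.bipartiteAbove G.Adj v := by
  ext
  simp [adj_comm]

variable [Fintype V]

variable (G) in
noncomputable def sphereFinset (c : V) (d : ℕ) : Finset V := {x | G.dist c x = d}

@[simp]
lemma mem_sphereFinset {c x : V} {d : ℕ} : x ∈ G.sphereFinset c d ↔ G.dist c x = d := by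
  simp [sphereFinset]

lemma Connected.sphereFinset_zero (hconn : G.Connected) (c : V) : G.sphereFinset c 0 = {c} := by
  ext
  simp [hconn.dist_eq_zero_iff, eq_comm]

lemma Connected.sum_sum_sphereFinset {M : Type*} [AddCommMonoid M] (hconn : G.Connected)
    (c : V) (f : V → M) :
    ∑ d ∈ range (G.diam + 1), ∑ x ∈ G.sphereFinset c d, f x = ∑ x, f x := by
  have : Nonempty V := hconn.nonempty
  exact sum_fiberwise_of_maps_to
    (fun x _ => mem_range_succ_iff.2 (dist_le_diam (connected_iff_ediam_ne_top.1 hconn))) f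

namespace IsDistRegularWith

variable {b c : ℕ → ℕ}

section bipartite

variable [DecidableRel G.Adj] (hG : G.IsDistRegularWith b c)
include hG

lemma card_bipartiteAbove_succ {x y : V} {d : ℕ} (hy : y ∈ G.sphereFinset x d) :
    #((G.sphereFinset x (d + 1)).bipartiteAbove G.Adj y) = b d := by
  rw [← (hG x y d (mem_sphereFinset.1 hy)).1, Nat.card_eq_fintype_card, Fintype.card_subtype]
  congr 1
  ext
  simp [bipartiteAbove, and_comm]

lemma card_bipartiteAbove_pred {x z : V} {d : ℕ} (hz : z ∈ G.sphereFinset x (d + 1)) :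
    #((G.sphereFinset x d).bipartiteAbove G.Adj z) = c (d + 1) := by
  rw [← (hG x z (d + 1) (mem_sphereFinset.1 hz)).2, Nat.card_eq_fintype_card,
    Fintype.card_subtype]
  congr 1
  ext
  simp [bipartiteAbove, and_comm]

lemma card_sphereFinset_mul (x : V) (d : ℕ) :
    #(G.sphereFinset x d) * b d = #(G.sphereFinset x (d + 1)) * c (d + 1) :=
  card_mul_eq_card_mul G.Adj (fun _ hy => hG.card_bipartiteAbove_succ hy)
    fun _ hz => by rw [bipartiteBelow_adj]; exact hG.card_bipartiteAbove_pred hz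

lemma pos_of_sphereFinset_nonempty {x : V} {d : ℕ}
    (h : (G.sphereFinset x (d + 1)).Nonempty) : 0 < c (d + 1) := by
  obtain ⟨z, hz⟩ := h
  obtain ⟨y, hzy, hy⟩ := exists_adj_dist_eq_of_dist_eq_succ (mem_sphereFinset.1 hz)
  rw [← hG.card_bipartiteAbove_pred hz]
  exact card_pos.2 ⟨y, (mem_bipartiteAbove G.Adj).2 ⟨mem_sphereFinset.2 hy, hzy⟩⟩

variable {R : Type*} [CommSemiring R] [PartialOrder R] [IsOrderedRing R] {C : R} {g : V → R}

lemma mul_sum_sphereFinset_le (hg : ∀ y z, G.Adj y z → g y ≤ C * g z) (x : V) (d : ℕ) :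
    b d * ∑ y ∈ G.sphereFinset x d, g y
      ≤ C * (c (d + 1) * ∑ z ∈ G.sphereFinset x (d + 1), g z) :=
  mul_sum_le_mul_mul_sum_of_bipartite G.Adj (fun _ hy => hG.card_bipartiteAbove_succ hy)
    (fun _ hz => by rw [bipartiteBelow_adj]; exact hG.card_bipartiteAbove_pred hz)
    fun y _ z _ h => hg y z h

lemma mul_sum_sphereFinset_succ_le (hg : ∀ y z, G.Adj y z → g y ≤ C * g z) (x : V) (d : ℕ) :
    c (d + 1) * ∑ z ∈ G.sphereFinset x (d + 1), g z
      ≤ C * (b d * ∑ y ∈ G.sphereFinset x d, g y) :=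
  mul_sum_le_mul_mul_sum_of_bipartite G.Adj (fun _ hz => hG.card_bipartiteAbove_pred hz)
    (fun _ hy => by rw [bipartiteBelow_adj]; exact hG.card_bipartiteAbove_succ hy)
    fun z _ y _ h => hg z y h

end bipartite

lemma card_sphereFinset_eq (hG : G.IsDistRegularWith b c) (hconn : G.Connected) (x x' : V)
    (d : ℕ) : #(G.sphereFinset x d) = #(G.sphereFinset x' d) := by
  classical
  induction d with
  | zero => simp [hconn.sphereFinset_zero]
  | succ d ih =>
    by_cases hc : c (d + 1) = 0
    · have hempty (v : V) : G.sphereFinset v (d + 1) = ∅ :=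
        not_nonempty_iff_eq_empty.1 fun h => (hG.pos_of_sphereFinset_nonempty h).ne' hc
      rw [hempty, hempty]
    · refine Nat.eq_of_mul_eq_mul_right (Nat.pos_of_ne_zero hc) ?_
      rw [← hG.card_sphereFinset_mul, ← hG.card_sphereFinset_mul, ih]

end IsDistRegularWith

variable (G) in
noncomputable def sphereSum (A : V → V → ℝ) (d : ℕ) : ℝ :=
  ∑ j, ∑ x ∈ G.sphereFinset j d, A x j

variable (G) in
/-- The mean of the entries `A x j` over the pairs with `G.dist j x = d`, and `0` if there are
none. -/
noncomputable def distAverage (A : V → V → ℝ) (d : ℕ) : ℝ :=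
  G.sphereSum A d / (∑ j, #(G.sphereFinset j d) : ℕ)

variable {A : V → V → ℝ}

lemma distAverage_nonneg (hA : ∀ x j, 0 ≤ A x j) (d : ℕ) : 0 ≤ G.distAverage A d :=
  div_nonneg (sum_nonneg fun _ _ => sum_nonneg fun _ _ => hA _ _) (Nat.cast_nonneg _)

lemma sum_card_mul_distAverage (d : ℕ) :
    (∑ j, #(G.sphereFinset j d) : ℕ) * G.distAverage A d = G.sphereSum A d := by
  rcases eq_or_ne (∑ j, #(G.sphereFinset j d)) 0 with h | h
  · have hempty (j : V) : G.sphereFinset j d = ∅ := by simpa using sum_eq_zero_iff.1 h j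
    simp [sphereSum, hempty]
  · exact mul_div_cancel₀ _ (Nat.cast_ne_zero.2 h)

lemma Connected.sphereSum_zero (hconn : G.Connected) : G.sphereSum A 0 = ∑ j, A j j := by
  simp [sphereSum, hconn.sphereFinset_zero]

lemma Connected.sum_range_sphereSum (hconn : G.Connected) :
    ∑ d ∈ range (G.diam + 1), G.sphereSum A d = ∑ x, ∑ j, A x j := by
  simp only [sphereSum]
  rw [sum_comm, sum_comm (s := univ) (t := univ)]
  exact sum_congr rfl fun j _ => hconn.sum_sum_sphereFinset j (A · j)

lemma Connected.card_mul_distAverage_zero (hconn : G.Connected) :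
    Fintype.card V * G.distAverage A 0 = ∑ j, A j j := by
  rw [← hconn.sphereSum_zero, ← sum_card_mul_distAverage]
  simp [hconn.sphereFinset_zero]

namespace IsDistRegularWith

variable {b c : ℕ → ℕ} (hG : G.IsDistRegularWith b c)
include hG

section

variable {C : ℝ} (hA : ∀ y z, G.Adj y z → ∀ j, A y j ≤ C * A z j)
include hA

lemma mul_sphereSum_le (d : ℕ) :
    b d * G.sphereSum A d ≤ C * (c (d + 1) * G.sphereSum A (d + 1)) := by
  classical
  rw [sphereSum, sphereSum, mul_sum, mul_sum, mul_sum]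
  exact sum_le_sum fun j _ => hG.mul_sum_sphereFinset_le (fun y z h => hA y z h j) j d

lemma mul_sphereSum_succ_le (d : ℕ) :
    c (d + 1) * G.sphereSum A (d + 1) ≤ C * (b d * G.sphereSum A d) := by
  classical
  rw [sphereSum, sphereSum, mul_sum, mul_sum, mul_sum]
  exact sum_le_sum fun j _ => hG.mul_sum_sphereFinset_succ_le (fun y z h => hA y z h j) j d

end

variable (hconn : G.Connected)
include hconn

lemma sum_card_sphereFinset (i : V) (d : ℕ) :
    ∑ j, #(G.sphereFinset j d) = Fintype.card V * #(G.sphereFinset i d) := by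
  rw [sum_congr rfl fun j _ => hG.card_sphereFinset_eq hconn j i d, sum_const, card_univ,
    smul_eq_mul]

lemma card_mul_card_sphereFinset_mul_distAverage (i : V) (d : ℕ) :
    (Fintype.card V * #(G.sphereFinset i d) : ℕ) * G.distAverage A d = G.sphereSum A d := by
  rw [← hG.sum_card_sphereFinset hconn i, sum_card_mul_distAverage]

lemma distAverage_le_distAverage_zero (hA : ∀ x j, 0 ≤ A x j) (hdiag : ∀ x j, A x j ≤ A j j)
    (d : ℕ) : G.distAverage A d ≤ G.distAverage A 0 := by
  obtain ⟨i⟩ := hconn.nonempty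
  have hsum : G.sphereSum A d ≤ #(G.sphereFinset i d) * (Fintype.card V * G.distAverage A 0) :=
    calc G.sphereSum A d ≤ ∑ j, ∑ _x ∈ G.sphereFinset j d, A j j :=
          sum_le_sum fun j _ => sum_le_sum fun x _ => hdiag x j
      _ = #(G.sphereFinset i d) * (Fintype.card V * G.distAverage A 0) := by
          simp only [sum_const, hG.card_sphereFinset_eq hconn _ i, nsmul_eq_mul, ← mul_sum,
            hconn.card_mul_distAverage_zero]
  rcases Nat.eq_zero_or_pos #(G.sphereFinset i d) with h | h
  · rw [distAverage, hG.sum_card_sphereFinset hconn i, h]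
    simpa using distAverage_nonneg hA 0
  · rw [← hG.card_mul_card_sphereFinset_mul_distAverage hconn i] at hsum
    refine le_of_mul_le_mul_left (hsum.trans_eq ?_)
      (Nat.cast_pos.2 (Nat.mul_pos (Fintype.card_pos_iff.2 ⟨i⟩) h))
    push_cast
    ring

lemma sum_distAverage_dist (i : V) :
    ∑ j, G.distAverage A (G.dist i j) = (∑ x, ∑ j, A x j) / Fintype.card V := by
  have hN : (Fintype.card V : ℝ) ≠ 0 := Nat.cast_ne_zero.2 (Fintype.card_pos_iff.2 ⟨i⟩).ne'
  calc ∑ j, G.distAverage A (G.dist i j)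
      = ∑ d ∈ range (G.diam + 1), ∑ _j ∈ G.sphereFinset i d, G.distAverage A d := by
        rw [← hconn.sum_sum_sphereFinset i]
        exact sum_congr rfl fun d _ => sum_congr rfl fun j hj => by rw [mem_sphereFinset.1 hj]
    _ = ∑ d ∈ range (G.diam + 1), G.sphereSum A d / Fintype.card V := by
        refine sum_congr rfl fun d _ => ?_
        rw [sum_const, nsmul_eq_mul, eq_div_iff hN,
          ← hG.card_mul_card_sphereFinset_mul_distAverage hconn i]
        push_cast
        ring
    _ = (∑ x, ∑ j, A x j) / Fintype.card V := by rw [← sum_div, hconn.sum_range_sphereSum]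

lemma exists_pos_mul_distAverage {x : V} {d : ℕ} (hd : (G.sphereFinset x (d + 1)).Nonempty) :
    ∃ P : ℝ, 0 < P ∧ P * G.distAverage A d = b d * G.sphereSum A d ∧
      P * G.distAverage A (d + 1) = c (d + 1) * G.sphereSum A (d + 1) := by
  classical
  have hcard := hG.card_sphereFinset_mul x d
  refine ⟨(Fintype.card V * #(G.sphereFinset x d) * b d : ℕ), ?_, ?_, ?_⟩
  · rw [Nat.mul_assoc, hcard]
    exact Nat.cast_pos.2 (Nat.mul_pos (Fintype.card_pos_iff.2 ⟨x⟩)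
      (Nat.mul_pos (card_pos.2 hd) (hG.pos_of_sphereFinset_nonempty hd)))
  · rw [← hG.card_mul_card_sphereFinset_mul_distAverage hconn x]
    push_cast
    ring
  · rw [Nat.mul_assoc, hcard, ← Nat.mul_assoc,
      ← hG.card_mul_card_sphereFinset_mul_distAverage hconn x (d + 1)]
    push_cast
    ring

variable {C : ℝ} (hA : ∀ y z, G.Adj y z → ∀ j, A y j ≤ C * A z j)
include hA

lemma distAverage_le_mul_distAverage_succ {x : V} {d : ℕ}
    (hd : (G.sphereFinset x (d + 1)).Nonempty) :
    G.distAverage A d ≤ C * G.distAverage A (d + 1) := by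
  obtain ⟨P, hP, hPd, hPs⟩ := hG.exists_pos_mul_distAverage hconn (A := A) hd
  refine le_of_mul_le_mul_left ?_ hP
  rw [hPd, mul_left_comm, hPs]
  exact hG.mul_sphereSum_le hA d

lemma distAverage_succ_le_mul_distAverage {x : V} {d : ℕ}
    (hd : (G.sphereFinset x (d + 1)).Nonempty) :
    G.distAverage A (d + 1) ≤ C * G.distAverage A d := by
  obtain ⟨P, hP, hPd, hPs⟩ := hG.exists_pos_mul_distAverage hconn (A := A) hd
  refine le_of_mul_le_mul_left ?_ hP
  rw [hPs, mul_left_comm, hPd]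
  exact hG.mul_sphereSum_succ_le hA d

lemma distAverage_dist_le_mul_distAverage_dist (hA₀ : ∀ x j, 0 ≤ A x j) (hC : 1 ≤ C) {i h : V}
    (hadj : G.Adj i h) (j : V) :
    G.distAverage A (G.dist i j) ≤ C * G.distAverage A (G.dist h j) := by
  rw [dist_comm, G.dist_comm (u := h)]
  have := hadj.diff_dist_adj (u := j)
  have := hadj.symm.diff_dist_adj (u := j)
  rcases (by omega : G.dist j i = G.dist j h ∨ G.dist j h = G.dist j i + 1 ∨
      G.dist j i = G.dist j h + 1) with e | e | e <;> rw [e]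
  · exact le_mul_of_one_le_left (SimpleGraph.distAverage_nonneg hA₀ _) hC
  · exact hG.distAverage_le_mul_distAverage_succ hconn hA ⟨_, mem_sphereFinset.2 e⟩
  · exact hG.distAverage_succ_le_mul_distAverage hconn hA ⟨_, mem_sphereFinset.2 e⟩

end IsDistRegularWith

end SimpleGraph

/-- **Step 2a of the matrix transformation.** Let `G` be a connected
finite distance-regular graph on `V`, and let `M'` be an `ε`-differentially private
channel matrix (with output alphabet `V ⊕ W`) whose column maxima are on the diagonal
and whose last `|W|` columns are zero. Then there is an `ε`-differentially private
channel matrix `M''` whose diagonal entries all equal the global maximum entry, whose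
last `|W|` columns are zero, and which has the same sum of column maxima (hence the
same a posteriori min-entropy under the uniform input distribution). -/
theorem dp_transform_distRegular {V W : Type*} [Fintype V] [Fintype W]
    (G : SimpleGraph V) (hconn : G.Connected) (hdr : IsDistRegular G)
    (ε : ℝ) (hε : 0 < ε) (M' : V → (V ⊕ W) → ℝ)
    (hnn : ∀ i b, 0 ≤ M' i b) (hrow : ∀ i, ∑ b, M' i b = 1)
    (hdp : ∀ i h, G.Adj i h → ∀ b, M' i b ≤ Real.exp ε * M' h b)
    (hdiag : ∀ i h : V, M' h (Sum.inl i) ≤ M' i (Sum.inl i))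
    (hzero : ∀ i w, M' i (Sum.inr w) = 0) :
    ∃ M'' : V → (V ⊕ W) → ℝ,
      (∀ i b, 0 ≤ M'' i b) ∧
      (∀ i, ∑ b, M'' i b = 1) ∧
      (∀ i h : V, ∀ b : V ⊕ W, M'' h b ≤ M'' i (Sum.inl i)) ∧
      (∀ i w, M'' i (Sum.inr w) = 0) ∧
      (∀ i h, G.Adj i h → ∀ b, M'' i b ≤ Real.exp ε * M'' h b) ∧
      (∑ b, ⨆ i, M'' i b) = (∑ b, ⨆ i, M' i b) := by
  obtain ⟨b, c, hG : G.IsDistRegularWith b c⟩ := hdr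
  have : Nonempty V := hconn.nonempty
  set A : V → V → ℝ := fun x j => M' x (Sum.inl j)
  set f := G.distAverage A
  have hA₀ (x j : V) : 0 ≤ A x j := hnn x _
  have hrowA (x : V) : ∑ j, A x j = 1 := by simpa [Fintype.sum_sum_type, hzero] using hrow x
  have hf_le (d : ℕ) : f d ≤ f 0 :=
    hG.distAverage_le_distAverage_zero hconn hA₀ (fun x j => hdiag j x) d
  have hcol (j : V) : ⨆ i, f (G.dist i j) = f 0 := by
    simpa using ciSup_eq_of_forall_le_apply (f := fun i => f (G.dist i j)) (j := j)
      fun i => by simpa using hf_le _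
  refine ⟨fun i => Sum.elim (fun j => f (G.dist i j)) 0, ?_, fun i => ?_, ?_, fun _ _ => rfl,
    ?_, ?_⟩
  · rintro i (j | w)
    exacts [SimpleGraph.distAverage_nonneg hA₀ _, le_rfl]
  · simp only [Fintype.sum_sum_type, Sum.elim_inl, Sum.elim_inr, Pi.zero_apply, sum_const_zero,
      add_zero]
    exact (hG.sum_distAverage_dist hconn i).trans (by simp [hrowA])
  · rintro i h (j | w)
    · simpa using hf_le _
    · simpa using SimpleGraph.distAverage_nonneg hA₀ 0
  · rintro i h hadj (j | w)
    · exact hG.distAverage_dist_le_mul_distAverage_dist hconn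
        (fun y z h j => hdp y z h (Sum.inl j)) hA₀ (Real.one_le_exp hε.le) hadj j
    · simp
  · simp only [Fintype.sum_sum_type, Sum.elim_inl, Sum.elim_inr, Pi.zero_apply, hzero,
      ciSup_const, hcol, ciSup_eq_of_forall_le_apply (hdiag _)]
    simp [hconn.card_mul_distAverage_zero, A, f]
end

section
/- Let G = (V, ∼) be a finite VT⁺ graph, let W be a finite set, let ε > 0, and let M' : V → (V ⊕ W) → ℝ be a channel matrix satisfying ε-differential privacy with respect to ∼ such that M' i (inl i) = max_{h ∈ V} M' h (inl i) for every i ∈ V and M' i (inr w) = 0 for all i ∈ V, w ∈ W. Then there exists a channel matrix M'' : V → (V ⊕ W) → ℝ such that: (i) for every i ∈ V, M'' i (inl i) equals the maximum entry of M''; (ii) M'' i (inr w) = 0 for all i ∈ V, w ∈ W; (iii) M'' satisfies ε-differential privacy with respect to ∼; (iv) ∑_{b ∈ V ⊕ W} max_{i ∈ V} M'' i b = ∑_{b ∈ V ⊕ W} max_{i ∈ V} M' i b. -/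
/-! Average `M'` over the automorphisms `σ_k`, relabelling the inputs and the outputs `inl j`
simultaneously. Differential privacy and the zero columns survive, because the constraints are
linear and each `σ_k` preserves adjacency. Since `k ↦ σ_k i` is a bijection for each `i`, every
diagonal entry of the average becomes `tr(M') / n`, which dominates every entry because the column
maxima of `M'` sit on the diagonal. Both sums of column maxima then equal the trace of `M'`. -/

/-- A finite graph `G` with `n` vertices is `VT⁺` if there are `n` graph automorphisms
`σ_0, …, σ_{n-1}` such that for every vertex `x` the map `i ↦ σ_i x` is a bijection onto
the vertex set. -/
def IsVTPlus {V : Type*} [Fintype V] (G : SimpleGraph V) : Prop :=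
  ∃ σ : Fin (Fintype.card V) → (G ≃g G),
    ∀ x : V, Function.Bijective fun i => (σ i) x

open Finset

section ConjAverage

variable {ι V W : Type*} [Fintype ι]

noncomputable def conjAverage (σ : ι → V ≃ V) (M : V → V ⊕ W → ℝ) (i : V)
    (b : V ⊕ W) : ℝ :=
  (∑ k, M (σ k i) (Equiv.sumCongr (σ k) (Equiv.refl W) b)) / Fintype.card ι

variable {σ : ι → V ≃ V} {M : V → V ⊕ W → ℝ}

theorem conjAverage_nonneg (hM : ∀ i b, 0 ≤ M i b) (i : V) (b : V ⊕ W) :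
    0 ≤ conjAverage σ M i b :=
  div_nonneg (sum_nonneg fun _ _ => hM _ _) (Nat.cast_nonneg _)

theorem sum_conjAverage [Fintype V] [Fintype W] (hσ : ∀ x, Function.Surjective fun k => σ k x)
    (hM : ∀ i, ∑ b, M i b = 1) (i : V) : ∑ b, conjAverage σ M i b = 1 := by
  have : Nonempty ι := ⟨(hσ i i).choose⟩
  simp only [conjAverage, ← sum_div]
  rw [sum_comm]
  simp only [Equiv.sum_comp, hM, sum_const, card_univ, nsmul_eq_mul, mul_one]
  exact div_self (Nat.cast_ne_zero.mpr Fintype.card_ne_zero)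

theorem conjAverage_inr (hM : ∀ i w, M i (Sum.inr w) = 0) (i : V) (w : W) :
    conjAverage σ M i (Sum.inr w) = 0 := by
  simp [conjAverage, hM]

theorem conjAverage_le_mul {G : SimpleGraph V}
    (hσ : ∀ k {i h}, G.Adj i h → G.Adj (σ k i) (σ k h))
    {c : ℝ} (hM : ∀ i h, G.Adj i h → ∀ b, M i b ≤ c * M h b) (i h : V) (hih : G.Adj i h)
    (b : V ⊕ W) : conjAverage σ M i b ≤ c * conjAverage σ M h b := by
  rw [conjAverage, conjAverage, ← mul_div_assoc, mul_sum]
  gcongr with k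
  exact hM _ _ (hσ k hih) _

theorem conjAverage_inl_self [Fintype V] (hσ : ∀ x, Function.Bijective fun k => σ k x) (i : V) :
    conjAverage σ M i (Sum.inl i) = (∑ h, M h (Sum.inl h)) / Fintype.card ι := by
  simp only [conjAverage, Equiv.sumCongr_apply, Sum.map_inl]
  rw [Fintype.sum_bijective _ (hσ i) _ (fun h => M h (Sum.inl h)) fun _ => rfl]

theorem conjAverage_le_inl_self [Fintype V] (hσ : ∀ x, Function.Bijective fun k => σ k x)
    (hM : ∀ i b, 0 ≤ M i b) (hdiag : ∀ i h, M h (Sum.inl i) ≤ M i (Sum.inl i))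
    (hzero : ∀ i w, M i (Sum.inr w) = 0) (i h : V) (b : V ⊕ W) :
    conjAverage σ M h b ≤ conjAverage σ M i (Sum.inl i) := by
  rcases b with j | w
  · calc conjAverage σ M h (Sum.inl j) ≤ conjAverage σ M j (Sum.inl j) := by
          unfold conjAverage
          gcongr with k
          simpa using hdiag _ _
      _ = conjAverage σ M i (Sum.inl i) := by
          rw [conjAverage_inl_self hσ, conjAverage_inl_self hσ]
  · rw [conjAverage_inr hzero]
    exact conjAverage_nonneg hM _ _

theorem sum_conjAverage_inl_self [Fintype V] (hσ : ∀ x, Function.Bijective fun k => σ k x) :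
    ∑ i, conjAverage σ M i (Sum.inl i) = ∑ i, M i (Sum.inl i) := by
  rcases isEmpty_or_nonempty V with hV | hV
  · simp
  simp only [conjAverage_inl_self hσ, sum_const, card_univ, nsmul_eq_mul,
    Fintype.card_of_bijective (hσ hV.some)]
  exact mul_div_cancel₀ _ (Nat.cast_ne_zero.mpr Fintype.card_ne_zero)

end ConjAverage

theorem sum_ciSup_eq_sum_inl_self {V W : Type*} [Fintype V] [Fintype W] {M : V → V ⊕ W → ℝ}
    (hdiag : ∀ i h, M h (Sum.inl i) ≤ M i (Sum.inl i)) (hzero : ∀ i w, M i (Sum.inr w) = 0) :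
    ∑ b, ⨆ i, M i b = ∑ i, M i (Sum.inl i) := by
  have hcol (j : V) : ⨆ i, M i (Sum.inl j) = M j (Sum.inl j) :=
    have : Nonempty V := ⟨j⟩
    le_antisymm (ciSup_le (hdiag j))
      (le_ciSup (Set.finite_range fun i => M i (Sum.inl j)).bddAbove j)
  simp [Fintype.sum_sum_type, hcol, hzero, Real.iSup_const_zero]

theorem dp_transform_vtPlus_general {V W : Type*} [Fintype V] [Fintype W]
    (G : SimpleGraph V) (hvt : IsVTPlus G)
    (ε : ℝ) (M' : V → (V ⊕ W) → ℝ)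
    (hnn : ∀ i b, 0 ≤ M' i b) (hrow : ∀ i, ∑ b, M' i b = 1)
    (hdp : ∀ i h, G.Adj i h → ∀ b, M' i b ≤ Real.exp ε * M' h b)
    (hdiag : ∀ i h : V, M' h (Sum.inl i) ≤ M' i (Sum.inl i))
    (hzero : ∀ i w, M' i (Sum.inr w) = 0) :
    ∃ M'' : V → (V ⊕ W) → ℝ,
      (∀ i b, 0 ≤ M'' i b) ∧
      (∀ i, ∑ b, M'' i b = 1) ∧
      (∀ i h : V, ∀ b : V ⊕ W, M'' h b ≤ M'' i (Sum.inl i)) ∧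
      (∀ i w, M'' i (Sum.inr w) = 0) ∧
      (∀ i h, G.Adj i h → ∀ b, M'' i b ≤ Real.exp ε * M'' h b) ∧
      (∑ b, ⨆ i, M'' i b) = (∑ b, ⨆ i, M' i b) := by
  obtain ⟨σ, hσ⟩ := hvt
  have hmax := conjAverage_le_inl_self (σ := fun k => (σ k).toEquiv) hσ hnn hdiag hzero
  refine ⟨conjAverage (fun k => (σ k).toEquiv) M', conjAverage_nonneg hnn,
    sum_conjAverage (fun x => (hσ x).2) hrow, hmax, conjAverage_inr hzero,
    conjAverage_le_mul (fun k _ _ => (σ k).map_adj_iff.mpr) hdp, ?_⟩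
  rw [sum_ciSup_eq_sum_inl_self (fun i h => hmax i h _) (conjAverage_inr hzero),
    sum_ciSup_eq_sum_inl_self hdiag hzero, sum_conjAverage_inl_self hσ]

/-- **Step 2b of the matrix transformation.** Let `G` be a finite `VT⁺`
graph on `V`, and let `M'` be an `ε`-differentially private channel matrix (with output
alphabet `V ⊕ W`) whose column maxima are on the diagonal and whose last `|W|` columns
are zero. Then there is an `ε`-differentially private channel matrix `M''` whose
diagonal entries all equal the global maximum entry, whose last `|W|` columns are zero,
and which has the same sum of column maxima (hence the same a posteriori min-entropy
under the uniform input distribution). -/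
theorem dp_transform_vtPlus {V W : Type*} [Fintype V] [Fintype W]
    (G : SimpleGraph V) (hvt : IsVTPlus G)
    (ε : ℝ) (hε : 0 < ε) (M' : V → (V ⊕ W) → ℝ)
    (hnn : ∀ i b, 0 ≤ M' i b) (hrow : ∀ i, ∑ b, M' i b = 1)
    (hdp : ∀ i h, G.Adj i h → ∀ b, M' i b ≤ Real.exp ε * M' h b)
    (hdiag : ∀ i h : V, M' h (Sum.inl i) ≤ M' i (Sum.inl i))
    (hzero : ∀ i w, M' i (Sum.inr w) = 0) :
    ∃ M'' : V → (V ⊕ W) → ℝ,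
      (∀ i b, 0 ≤ M'' i b) ∧
      (∀ i, ∑ b, M'' i b = 1) ∧
      (∀ i h : V, ∀ b : V ⊕ W, M'' h b ≤ M'' i (Sum.inl i)) ∧
      (∀ i w, M'' i (Sum.inr w) = 0) ∧
      (∀ i h, G.Adj i h → ∀ b, M'' i b ≤ Real.exp ε * M'' h b) ∧
      (∑ b, ⨆ i, M'' i b) = (∑ b, ⨆ i, M' i b) :=
  dp_transform_vtPlus_general G hvt ε M' hnn hrow hdp hdiag hzero
end

section
/- Let G = (V, ∼) be a connected finite simple graph with graph distance dist, let ε > 0, and let M : V → V → ℝ be a channel matrix satisfying ε-differential privacy with respect to ∼ such that for every i ∈ V, M i i equals the maximum entry max^M of M. Then for every i ∈ V: max^M · ∑_{j ∈ V} exp(−ε · dist(i, j)) ≤ 1; equivalently, max^M ≤ 1 / (∑_{d=0}^{δ} n_d(i) · exp(−ε d)), where δ is the diameter of G and n_d(i) = |{j ∈ V : dist(i, j) = d}|. -/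
/-- **bound on the maximum element of the matrix.** Let `G` be a connected
finite simple graph, and let `M` be a channel matrix satisfying `ε`-differential privacy
with respect to adjacency in `G`, such that every diagonal entry `M i i` equals the
global maximum entry of `M`. Then for every `i`,
`M i i * ∑_j exp (-ε * dist i j) ≤ 1`; equivalently,
`M i i ≤ 1 / ∑_{d=0}^{δ} n_d(i) * exp (-ε * d)`, where `δ` is the diameter of `G` and
`n_d(i)` is the number of vertices at distance `d` from `i`. -/
theorem dp_diag_max_bound {V : Type*} [Fintype V]
    (G : SimpleGraph V) (hconn : G.Connected)
    (ε : ℝ) (hε : 0 < ε) (M : V → V → ℝ)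
    (hnn : ∀ i j, 0 ≤ M i j) (hrow : ∀ i, ∑ j, M i j = 1)
    (hdp : ∀ i h, G.Adj i h → ∀ j, M i j ≤ Real.exp ε * M h j)
    (hdiag : ∀ i h j : V, M h j ≤ M i i) :
    ∀ i : V,
      M i i * ∑ j, Real.exp (-ε * (G.dist i j : ℝ)) ≤ 1 ∧
      M i i ≤ 1 / ∑ d ∈ Finset.range (G.diam + 1),
        (Nat.card {j : V // G.dist i j = d} : ℝ) * Real.exp (-ε * (d : ℝ)) := by
  have hVne : Nonempty V := hconn.nonempty
  -- all diagonal entries are equal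
  have hdiageq : ∀ i j : V, M j j = M i i := fun i j =>
    le_antisymm (hdiag i j j) (hdiag j i i)
  -- DP along a walk
  have hwalk : ∀ (a b : V) (p : G.Walk a b) (j : V),
      M a j ≤ Real.exp (ε * p.length) * M b j := by
    intro a b p j
    induction p with
    | nil => simp
    | @cons a c b h q ih =>
      calc M a j ≤ Real.exp ε * M c j := hdp _ _ h j
        _ ≤ Real.exp ε * (Real.exp (ε * q.length) * M b j) :=
            mul_le_mul_of_nonneg_left ih (Real.exp_pos ε).le
        _ = Real.exp (ε * (q.cons h).length) * M b j := by
            rw [← mul_assoc, ← Real.exp_add, SimpleGraph.Walk.length_cons]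
            push_cast; ring_nf
  -- key pointwise bound
  have hkey : ∀ i j : V, M i i * Real.exp (-ε * (G.dist i j : ℝ)) ≤ M i j := by
    intro i j
    obtain ⟨p, hp⟩ := (hconn j i).exists_walk_length_eq_dist
    have := hwalk j i p j
    rw [hp, SimpleGraph.dist_comm] at this
    have h2 : M j j * Real.exp (-ε * (G.dist i j : ℝ)) ≤
        (Real.exp (ε * (G.dist i j : ℝ)) * M i j) * Real.exp (-ε * (G.dist i j : ℝ)) :=
      mul_le_mul_of_nonneg_right this (Real.exp_pos _).le
    rw [hdiageq i j] at h2
    calc M i i * Real.exp (-ε * (G.dist i j : ℝ)) ≤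
        (Real.exp (ε * (G.dist i j : ℝ)) * M i j) * Real.exp (-ε * (G.dist i j : ℝ)) := h2
      _ = M i j := by rw [mul_comm (Real.exp _) (M i j), mul_assoc, ← Real.exp_add]; ring_nf; simp
  intro i
  -- first inequality
  have h1 : M i i * ∑ j, Real.exp (-ε * (G.dist i j : ℝ)) ≤ 1 := by
    rw [Finset.mul_sum]
    calc ∑ j, M i i * Real.exp (-ε * (G.dist i j : ℝ)) ≤ ∑ j, M i j :=
          Finset.sum_le_sum fun j _ => hkey i j
      _ = 1 := hrow i
  refine ⟨h1, ?_⟩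
  -- ediam is not top
  have hne : G.ediam ≠ ⊤ := by
    obtain ⟨u, v, huv⟩ := SimpleGraph.exists_edist_eq_ediam_of_finite (G := G)
    rw [← huv]
    exact SimpleGraph.edist_ne_top_iff_reachable.mpr (hconn u v)
  -- rewrite the sum over distances as the sum over vertices
  have hsum : ∑ d ∈ Finset.range (G.diam + 1),
      (Nat.card {j : V // G.dist i j = d} : ℝ) * Real.exp (-ε * (d : ℝ)) =
      ∑ j, Real.exp (-ε * (G.dist i j : ℝ)) := by
    rw [← Finset.sum_fiberwise_of_maps_to' (g := fun j => G.dist i j)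
      (t := Finset.range (G.diam + 1))
      (fun j _ => Finset.mem_range.mpr (Nat.lt_succ_of_le (SimpleGraph.dist_le_diam hne)))
      (fun d => Real.exp (-ε * (d : ℝ)))]
    refine Finset.sum_congr rfl fun d _ => ?_
    rw [Finset.sum_const, nsmul_eq_mul]
    congr 1
    rw [Nat.card_eq_fintype_card, Fintype.card_subtype]
  rw [hsum] at *
  have hpos : 0 < ∑ j, Real.exp (-ε * (G.dist i j : ℝ)) :=
    Finset.sum_pos (fun j _ => Real.exp_pos _) Finset.univ_nonempty
  rw [le_div_iff₀ hpos]
  exact h1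
end

section
/- Let G = (V, ∼) be a connected finite distance-regular graph with n = |V| vertices and graph distance dist, let B be a finite set, let ε > 0, and let M : V → B → ℝ be a channel matrix satisfying ε-differential privacy with respect to ∼. Then for every vertex i₀ ∈ V: ∑_{b ∈ B} max_{i ∈ V} M i b ≤ n / (∑_{j ∈ V} exp(−ε · dist(i₀, j))). Equivalently, under the uniform input distribution the a posteriori min-entropy satisfies H∞(V|B) ≥ −log₂(1 / ∑_{d=0}^{δ} n_d · exp(−ε d)), where n_d = |{j : dist(i₀, j) = d}| and δ is the diameter of G. -/
open Finset

namespace DPaux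

variable {V : Type*} [Fintype V] {G : SimpleGraph V}

lemma natCard_eq_filter (p : V → Prop) [DecidablePred p] :
    (Nat.card {j : V // p j}) = (univ.filter p).card := by
  simp [Nat.card_eq_fintype_card, Fintype.card_subtype]

/-- A vertex at distance `d+1` has a neighbor at distance `d`. -/
lemma exists_adj_dist (hconn : G.Connected) {x w : V} {d : ℕ}
    (h : G.dist x w = d + 1) : ∃ y, G.Adj w y ∧ G.dist x y = d := by
  obtain ⟨p, hp⟩ := SimpleGraph.exists_walk_of_dist_ne_zero (by omega : G.dist x w ≠ 0)
  have hrev : (p.reverse).length = d + 1 := by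
    rw [SimpleGraph.Walk.length_reverse, hp, h]
  cases hq : p.reverse with
  | nil => rw [hq] at hrev; simp at hrev
  | cons ha q =>
    rename_i y
    rw [hq] at hrev
    simp only [SimpleGraph.Walk.length_cons] at hrev
    have hqlen : q.length = d := by omega
    refine ⟨y, ha, ?_⟩
    have h1 : G.dist x y ≤ d := by
      have := SimpleGraph.dist_le q.reverse
      rwa [SimpleGraph.Walk.length_reverse, hqlen] at this
    have hyw : G.dist y w ≤ 1 := by
      have := SimpleGraph.dist_le (SimpleGraph.Walk.cons ha.symm SimpleGraph.Walk.nil)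
      simpa using this
    have h2 : G.dist x w ≤ G.dist x y + G.dist y w := hconn.dist_triangle
    omega

open Classical in
/-- Number of vertices at distance `d` from `x`. -/
noncomputable def sphN (G : SimpleGraph V) (x : V) (d : ℕ) : ℕ :=
  (univ.filter (fun j => G.dist x j = d)).card

open Classical in
/-- Double counting edges between consecutive spheres. -/
lemma double_count (x : V) (d : ℕ) (b c : ℕ → ℕ)
    (h : ∀ x y : V, ∀ d : ℕ, G.dist x y = d →
      Nat.card {w : V // G.Adj y w ∧ G.dist x w = d + 1} = b d ∧
      Nat.card {w : V // G.Adj y w ∧ G.dist x w = d - 1} = c d) :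
    sphN G x d * b d = sphN G x (d + 1) * c (d + 1) := by
  have key1 : ∀ y : V, G.dist x y = d →
      (univ.filter (fun w => G.dist x w = d + 1 ∧ G.Adj y w)).card = b d := by
    intro y hy
    have := (h x y d hy).1
    rw [natCard_eq_filter] at this
    rw [← this]
    congr 1
    ext w
    simp only [Finset.mem_filter, Finset.mem_univ, true_and]
    exact and_comm
  have key2 : ∀ w : V, G.dist x w = d + 1 →
      (univ.filter (fun y => G.dist x y = d ∧ G.Adj y w)).card = c (d + 1) := by
    intro w hw
    have := (h x w (d + 1) hw).2
    rw [natCard_eq_filter] at this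
    rw [← this]
    congr 1
    ext y
    simp only [Finset.mem_filter, Finset.mem_univ, true_and]
    constructor
    · rintro ⟨hd, hadj⟩; exact ⟨hadj.symm, by simpa using hd⟩
    · rintro ⟨hadj, hd⟩; exact ⟨by simpa using hd, hadj.symm⟩
  have lhs : ∑ y : V, ∑ w : V,
      (if G.dist x y = d ∧ G.dist x w = d + 1 ∧ G.Adj y w then 1 else 0)
      = sphN G x d * b d := by
    rw [sphN, Finset.card_filter, Finset.sum_mul]
    refine Finset.sum_congr rfl (fun y _ => ?_)
    by_cases hy : G.dist x y = d
    · rw [if_pos hy, one_mul, ← key1 y hy, Finset.card_filter]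
      exact Finset.sum_congr rfl (fun w _ => by simp [hy])
    · rw [if_neg hy, zero_mul]
      exact Finset.sum_eq_zero (fun w _ => by simp [hy])
  have rhs : ∑ w : V, ∑ y : V,
      (if G.dist x y = d ∧ G.dist x w = d + 1 ∧ G.Adj y w then 1 else 0)
      = sphN G x (d + 1) * c (d + 1) := by
    rw [sphN, Finset.card_filter, Finset.sum_mul]
    refine Finset.sum_congr rfl (fun w _ => ?_)
    by_cases hw : G.dist x w = d + 1
    · rw [if_pos hw, one_mul, ← key2 w hw, Finset.card_filter]
      refine Finset.sum_congr rfl (fun y _ => ?_)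
      by_cases h1 : G.dist x y = d <;> by_cases h2 : G.Adj y w <;> simp [h1, h2, hw]
    · rw [if_neg hw, zero_mul]
      exact Finset.sum_eq_zero (fun y _ => by simp [hw])
  rw [← lhs, ← rhs, Finset.sum_comm]

open Classical in
/-- In a distance-regular connected graph, sphere sizes are independent of the center. -/
lemma sphN_const (hconn : G.Connected) (hdr : IsDistRegular G) :
    ∀ d : ℕ, ∀ x y : V, sphN G x d = sphN G y d := by
  obtain ⟨b, c, h⟩ := hdr
  intro d
  induction d with
  | zero =>
    intro x y
    have hx : ∀ z : V, sphN G z 0 = 1 := by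
      intro z
      unfold sphN
      have hset : (univ.filter (fun j => G.dist z j = 0)) = {z} := by
        ext j
        simp only [Finset.mem_filter, Finset.mem_univ, true_and, Finset.mem_singleton]
        rw [hconn.dist_eq_zero_iff]
        exact eq_comm
      rw [hset, card_singleton]
    rw [hx x, hx y]
  | succ d ih =>
    intro x y
    by_cases hc : c (d + 1) = 0
    · have hzero : ∀ z : V, sphN G z (d + 1) = 0 := by
        intro z
        rw [sphN, card_eq_zero, filter_eq_empty_iff]
        intro w _ hw
        obtain ⟨u, hu, hud⟩ := exists_adj_dist hconn hw
        have hcard := (h z w (d + 1) hw).2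
        rw [hc] at hcard
        haveI : Nonempty {v : V // G.Adj w v ∧ G.dist z v = (d + 1) - 1} :=
          ⟨⟨u, hu, by simpa using hud⟩⟩
        have := Nat.card_pos (α := {v : V // G.Adj w v ∧ G.dist z v = (d + 1) - 1})
        omega
      rw [hzero x, hzero y]
    · have hx := double_count x d b c h
      have hy := double_count y d b c h
      have : sphN G x (d + 1) * c (d + 1) = sphN G y (d + 1) * c (d + 1) := by
        rw [← hx, ← hy, ih x y]
      exact Nat.eq_of_mul_eq_mul_right (Nat.pos_of_ne_zero hc) this

end DPaux

open DPaux in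
/-- Let `G` be a connected finite distance-regular graph with `n`
vertices, and let `M` be a channel matrix on `V × B` satisfying `ε`-differential privacy
with respect to adjacency in `G`. Then for every vertex `i₀`,
`∑_b max_i M i b ≤ n / ∑_j exp (-ε * dist i₀ j)`; equivalently, under the uniform input
distribution the a posteriori min-entropy satisfies
`H∞(V|B) ≥ -log₂ (1 / ∑_{d=0}^{δ} n_d * exp (-ε d))`. -/
theorem dp_min_entropy_bound_distRegular {V B : Type*} [Fintype V] [Fintype B]
    (G : SimpleGraph V) (hconn : G.Connected) (hdr : IsDistRegular G)
    (ε : ℝ) (hε : 0 < ε) (M : V → B → ℝ)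
    (hnn : ∀ i b, 0 ≤ M i b) (hrow : ∀ i, ∑ b, M i b = 1)
    (hdp : ∀ i h, G.Adj i h → ∀ b, M i b ≤ Real.exp ε * M h b) :
    ∀ i₀ : V,
      (∑ b, ⨆ i, M i b) ≤
        (Fintype.card V : ℝ) / ∑ j, Real.exp (-ε * (G.dist i₀ j : ℝ)) ∧
      -Real.logb 2 ((1 / (Fintype.card V : ℝ)) * ∑ b, ⨆ i, M i b) ≥
        -Real.logb 2 (1 / ∑ d ∈ Finset.range (G.diam + 1),
          (Nat.card {j : V // G.dist i₀ j = d} : ℝ) * Real.exp (-ε * (d : ℝ))) := by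
  classical
  intro i₀
  haveI : Nonempty V := hconn.nonempty
  -- walk bound
  have walk_bound : ∀ {i j : V} (p : G.Walk i j) (b : B),
      M i b ≤ Real.exp (ε * p.length) * M j b := by
    intro i j p b
    induction p with
    | nil => simp
    | cons ha q ih =>
      calc M _ b ≤ Real.exp ε * M _ b := hdp _ _ ha b
        _ ≤ Real.exp ε * (Real.exp (ε * q.length) * M _ b) := by
            exact mul_le_mul_of_nonneg_left ih (Real.exp_pos ε).le
        _ = Real.exp (ε * (SimpleGraph.Walk.cons ha q).length) * M _ b := by
            rw [← mul_assoc, ← Real.exp_add, SimpleGraph.Walk.length_cons]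
            congr 2
            push_cast
            ring
  have dist_bound : ∀ i j : V, ∀ b : B,
      M i b ≤ Real.exp (ε * G.dist i j) * M j b := by
    intro i j b
    obtain ⟨p, hp⟩ := hconn.exists_walk_length_eq_dist i j
    simpa [hp] using walk_bound p b
  -- ediam is finite
  have hediam : G.ediam ≠ ⊤ := by
    obtain ⟨u, v, huv⟩ := SimpleGraph.exists_edist_eq_ediam_of_finite (G := G)
    rw [← huv]
    exact SimpleGraph.edist_ne_top_iff_reachable.mpr (hconn u v)
  have hdistle : ∀ x j : V, G.dist x j ∈ Finset.range (G.diam + 1) := by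
    intro x j
    rw [Finset.mem_range, Nat.lt_succ_iff]
    exact SimpleGraph.dist_le_diam hediam
  -- Φ decomposition
  set Φ : V → ℝ := fun x => ∑ j, Real.exp (-ε * (G.dist x j : ℝ)) with hΦ
  have Φdecomp : ∀ x : V, Φ x = ∑ d ∈ Finset.range (G.diam + 1),
      (sphN G x d : ℝ) * Real.exp (-ε * (d : ℝ)) := by
    intro x
    simp only [hΦ]
    rw [← Finset.sum_fiberwise_of_maps_to (g := fun j => G.dist x j)
      (fun j _ => hdistle x j) (fun j => Real.exp (-ε * (G.dist x j : ℝ)))]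
    refine Finset.sum_congr rfl (fun d _ => ?_)
    rw [sphN, card_eq_sum_ones, Nat.cast_sum, Finset.sum_mul]
    refine Finset.sum_congr rfl (fun j hj => ?_)
    rw [Finset.mem_filter] at hj
    rw [hj.2]
    simp
  have Φconst : ∀ x : V, Φ x = Φ i₀ := by
    intro x
    rw [Φdecomp, Φdecomp]
    refine Finset.sum_congr rfl (fun d _ => ?_)
    rw [sphN_const hconn hdr d x i₀]
  have Φpos : 0 < Φ i₀ := by
    rw [hΦ]
    exact Finset.sum_pos (fun j _ => Real.exp_pos _) ⟨i₀, Finset.mem_univ i₀⟩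
  -- sup is attained
  have sup_attained : ∀ b : B, ∃ i : V, (⨆ i', M i' b) = M i b := by
    intro b
    obtain ⟨i, hi⟩ := Finite.exists_max (fun i => M i b)
    refine ⟨i, le_antisymm (ciSup_le hi) (le_ciSup (f := fun i' => M i' b) (Set.Finite.bddAbove (Set.finite_range _)) i)⟩
  choose ib hib using sup_attained
  -- main bound
  have main : (∑ b, ⨆ i, M i b) * Φ i₀ ≤ (Fintype.card V : ℝ) := by
    calc (∑ b, ⨆ i, M i b) * Φ i₀ = ∑ b, (⨆ i, M i b) * Φ (ib b) := by
          rw [Finset.sum_mul]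
          exact Finset.sum_congr rfl (fun b _ => by rw [Φconst (ib b)])
      _ = ∑ b, ∑ j, M (ib b) b * Real.exp (-ε * (G.dist (ib b) j : ℝ)) := by
          refine Finset.sum_congr rfl (fun b _ => ?_)
          rw [hib b, hΦ, Finset.mul_sum]
      _ ≤ ∑ b, ∑ j, M j b := by
          refine Finset.sum_le_sum (fun b _ => Finset.sum_le_sum (fun j _ => ?_))
          have hd := dist_bound (ib b) j b
          have hexp : (0:ℝ) < Real.exp (ε * (G.dist (ib b) j : ℝ)) := Real.exp_pos _
          rw [neg_mul, Real.exp_neg]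
          rw [mul_inv_le_iff₀ hexp]
          linarith [hd]
      _ = ∑ j : V, ∑ b, M j b := Finset.sum_comm
      _ = (Fintype.card V : ℝ) := by
          simp [hrow]
  have first : (∑ b, ⨆ i, M i b) ≤ (Fintype.card V : ℝ) / Φ i₀ :=
    (le_div_iff₀ Φpos).mpr main
  refine ⟨first, ?_⟩
  -- second part
  have hTdecomp : (∑ d ∈ Finset.range (G.diam + 1),
      (Nat.card {j : V // G.dist i₀ j = d} : ℝ) * Real.exp (-ε * (d : ℝ))) = Φ i₀ := by
    rw [Φdecomp]
    refine Finset.sum_congr rfl (fun d _ => ?_)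
    rw [natCard_eq_filter, sphN]
  rw [hTdecomp]
  have hn : (0:ℝ) < (Fintype.card V : ℝ) := by
    exact_mod_cast Fintype.card_pos
  have hSpos : (0:ℝ) < ∑ b, ⨆ i, M i b := by
    have : (1:ℝ) = ∑ b, M i₀ b := (hrow i₀).symm
    have hle : ∑ b, M i₀ b ≤ ∑ b, ⨆ i, M i b :=
      Finset.sum_le_sum (fun b _ =>
        le_ciSup (f := fun i' => M i' b) (Set.Finite.bddAbove (Set.finite_range _)) i₀)
    linarith
  have hxpos : (0:ℝ) < (1 / (Fintype.card V : ℝ)) * ∑ b, ⨆ i, M i b :=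
    mul_pos (by positivity) hSpos
  have hxle : (1 / (Fintype.card V : ℝ)) * (∑ b, ⨆ i, M i b) ≤ 1 / Φ i₀ := by
    calc (1 / (Fintype.card V : ℝ)) * (∑ b, ⨆ i, M i b)
        ≤ (1 / (Fintype.card V : ℝ)) * ((Fintype.card V : ℝ) / Φ i₀) :=
          mul_le_mul_of_nonneg_left first (by positivity)
      _ = 1 / Φ i₀ := by field_simp
  exact neg_le_neg (Real.logb_le_logb_of_le (by norm_num : (1:ℝ) < 2) hxpos hxle)
end

section
/- Let G = (V, ∼) be a connected finite VT⁺ graph with n = |V| vertices and graph distance dist, let B be a finite set, let ε > 0, and let M : V → B → ℝ be a channel matrix satisfying ε-differential privacy with respect to ∼. Then for every vertex i₀ ∈ V: ∑_{b ∈ B} max_{i ∈ V} M i b ≤ n / (∑_{j ∈ V} exp(−ε · dist(i₀, j))). Equivalently, under the uniform input distribution the a posteriori min-entropy satisfies H∞(V|B) ≥ −log₂(1 / ∑_{d=0}^{δ} n_d · exp(−ε d)), where n_d = |{j : dist(i₀, j) = d}| and δ is the diameter of G. -/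
/-!
Along a shortest path from `i` to `j`, differential privacy gives
`exp (-ε · dist i j) · M i b ≤ M j b`; summing over `j` bounds `(∑ⱼ exp (-ε · dist i j)) · M i b`
by the column sum `∑ⱼ M j b`. Vertex transitivity makes the weight `∑ⱼ exp (-ε · dist i j)`
independent of `i`, so taking `i` to maximise column `b` and summing over `b` bounds
`∑_b maxᵢ M i b` by `n` divided by this weight, since the rows of `M` sum to `1`.
-/

open Finset Real

namespace SimpleGraph

variable {V W : Type*} {G : SimpleGraph V} {G' : SimpleGraph W}

lemma Hom.edist_le (f : G →g G') (u v : V) : G'.edist (f u) (f v) ≤ G.edist u v :=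
  le_iInf fun p => (p.map f).edist_le.trans_eq (by rw [Walk.length_map])

lemma Iso.edist_eq (φ : G ≃g G') (u v : V) : G'.edist (φ u) (φ v) = G.edist u v :=
  le_antisymm (φ.toHom.edist_le u v) (by simpa using φ.symm.toHom.edist_le (φ u) (φ v))

lemma Iso.dist_eq (φ : G ≃g G') (u v : V) : G'.dist (φ u) (φ v) = G.dist u v := by
  rw [dist, dist, φ.edist_eq]

lemma Walk.le_exp_mul_length_mul {ε : ℝ} {g : V → ℝ}
    (hg : ∀ u v, G.Adj u v → g u ≤ exp ε * g v) {u v : V} (p : G.Walk u v) :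
    g u ≤ exp (ε * p.length) * g v := by
  induction p with
  | nil => simp
  | @cons x y z hxy p ih =>
    calc g x ≤ exp ε * g y := hg x y hxy
      _ ≤ exp ε * (exp (ε * p.length) * g z) := by gcongr
      _ = exp (ε * (p.cons hxy).length) * g z := by
        rw [← mul_assoc, ← exp_add, length_cons]; push_cast; ring_nf

lemma Reachable.exp_neg_mul_dist_mul_le {ε : ℝ} {g : V → ℝ}
    (hg : ∀ u v, G.Adj u v → g u ≤ exp ε * g v) {u v : V} (h : G.Reachable u v) :
    exp (-ε * G.dist u v) * g u ≤ g v := by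
  obtain ⟨p, hp⟩ := h.exists_walk_length_eq_dist
  rw [neg_mul, exp_neg, inv_mul_le_iff₀ (exp_pos _), ← hp]
  exact p.le_exp_mul_length_mul hg

variable [Fintype V]

lemma Connected.sum_exp_neg_mul_dist_mul_le_sum (hconn : G.Connected) {ε : ℝ} {g : V → ℝ}
    (hg : ∀ u v, G.Adj u v → g u ≤ exp ε * g v) (i : V) :
    (∑ j, exp (-ε * G.dist i j)) * g i ≤ ∑ j, g j := by
  rw [sum_mul]
  exact sum_le_sum fun j _ => (hconn i j).exp_neg_mul_dist_mul_le hg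

lemma Connected.sum_range_diam_card_dist_mul_eq {R : Type*} [Semiring R] (hconn : G.Connected)
    (f : ℕ → R) (x : V) :
    ∑ d ∈ range (G.diam + 1), (Nat.card {j : V // G.dist x j = d} : R) * f d =
      ∑ j, f (G.dist x j) := by
  have : Nonempty V := hconn.nonempty
  have hdist_mem (j : V) : G.dist x j ∈ range (G.diam + 1) :=
    mem_range_succ_iff.mpr (dist_le_diam (connected_iff_ediam_ne_top.mp hconn))
  classical
  rw [← sum_fiberwise_of_maps_to fun j _ => hdist_mem j]
  refine sum_congr rfl fun d _ => ?_
  rw [sum_congr rfl fun j hj => by rw [(mem_filter.mp hj).2], sum_const, nsmul_eq_mul,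
    Nat.card_eq_fintype_card, Fintype.card_subtype]

end SimpleGraph

namespace IsVTPlus

variable {V : Type*} [Fintype V] {G : SimpleGraph V}

lemma exists_iso_apply_eq (hvt : IsVTPlus G) (x y : V) : ∃ φ : G ≃g G, φ x = y := by
  obtain ⟨σ, hσ⟩ := hvt
  obtain ⟨i, hi⟩ := (hσ x).2 y
  exact ⟨σ i, hi⟩

lemma sum_comp_dist_eq {R : Type*} [AddCommMonoid R] (hvt : IsVTPlus G) (f : ℕ → R)
    (x y : V) : ∑ j, f (G.dist x j) = ∑ j, f (G.dist y j) := by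
  obtain ⟨φ, rfl⟩ := hvt.exists_iso_apply_eq y x
  rw [← Equiv.sum_comp φ.toEquiv]
  exact sum_congr rfl fun j _ => congrArg f (φ.dist_eq y j)

end IsVTPlus

section Channel

variable {V B : Type*} [Fintype V] [Fintype B]

lemma one_le_sum_ciSup {M : V → B → ℝ} (hrow : ∀ i, ∑ b, M i b = 1) (i₀ : V) :
    1 ≤ ∑ b, ⨆ i, M i b :=
  hrow i₀ ▸ sum_le_sum fun b _ =>
    le_ciSup (f := fun i => M i b) (Set.finite_range _).bddAbove i₀

lemma sum_ciSup_le_card_div_sum_exp_neg_mul_dist {G : SimpleGraph V} (hconn : G.Connected)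
    (hvt : IsVTPlus G) {ε : ℝ} {M : V → B → ℝ} (hrow : ∀ i, ∑ b, M i b = 1)
    (hdp : ∀ i h, G.Adj i h → ∀ b, M i b ≤ exp ε * M h b) (i₀ : V) :
    ∑ b, ⨆ i, M i b ≤ Fintype.card V / ∑ j, exp (-ε * G.dist i₀ j) := by
  have : Nonempty V := hconn.nonempty
  have hcolumn (b : B) : (∑ j, exp (-ε * G.dist i₀ j)) * ⨆ i, M i b ≤ ∑ j, M j b := by
    obtain ⟨i, hi⟩ := exists_eq_ciSup_of_finite (f := fun i => M i b)
    rw [← hi, hvt.sum_comp_dist_eq (fun d => exp (-ε * d)) i₀ i]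
    exact hconn.sum_exp_neg_mul_dist_mul_le_sum (fun u v huv => hdp u v huv b) i
  have hs : 0 < ∑ j, exp (-ε * G.dist i₀ j) := sum_pos (fun j _ => exp_pos _) univ_nonempty
  rw [le_div_iff₀' hs, mul_sum]
  calc ∑ b, (∑ j, exp (-ε * G.dist i₀ j)) * ⨆ i, M i b
      ≤ ∑ b, ∑ j, M j b := sum_le_sum fun b _ => hcolumn b
    _ = Fintype.card V := by simp [sum_comm (γ := B), hrow]

end Channel

theorem dp_min_entropy_bound_vtPlus_general {V B : Type*} [Fintype V] [Fintype B]
    (G : SimpleGraph V) (hconn : G.Connected) (hvt : IsVTPlus G)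
    (ε : ℝ) (M : V → B → ℝ)
    (hrow : ∀ i, ∑ b, M i b = 1)
    (hdp : ∀ i h, G.Adj i h → ∀ b, M i b ≤ Real.exp ε * M h b) :
    ∀ i₀ : V,
      (∑ b, ⨆ i, M i b) ≤
        (Fintype.card V : ℝ) / ∑ j, Real.exp (-ε * (G.dist i₀ j : ℝ)) ∧
      -Real.logb 2 ((1 / (Fintype.card V : ℝ)) * ∑ b, ⨆ i, M i b) ≥
        -Real.logb 2 (1 / ∑ d ∈ Finset.range (G.diam + 1),
          (Nat.card {j : V // G.dist i₀ j = d} : ℝ) * Real.exp (-ε * (d : ℝ))) := by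
  intro i₀
  have : Nonempty V := hconn.nonempty
  have hbound := sum_ciSup_le_card_div_sum_exp_neg_mul_dist hconn hvt hrow hdp i₀
  refine ⟨hbound, ?_⟩
  rw [hconn.sum_range_diam_card_dist_mul_eq (fun d => exp (-ε * d)) i₀]
  have hpos : 0 < ∑ b, ⨆ i, M i b := one_pos.trans_le (one_le_sum_ciSup hrow i₀)
  have hcard : (0 : ℝ) < Fintype.card V := Nat.cast_pos.mpr Fintype.card_pos
  refine neg_le_neg (logb_le_logb_of_le one_lt_two (by positivity) ?_)
  calc 1 / (Fintype.card V : ℝ) * ∑ b, ⨆ i, M i b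
      ≤ 1 / Fintype.card V * (Fintype.card V / ∑ j, exp (-ε * G.dist i₀ j)) := by gcongr
    _ = 1 / ∑ j, exp (-ε * G.dist i₀ j) := by field_simp

/-- Let `G` be a connected finite `VT⁺` graph with `n` vertices, and
let `M` be a channel matrix on `V × B` satisfying `ε`-differential privacy with respect
to adjacency in `G`. Then for every vertex `i₀`,
`∑_b max_i M i b ≤ n / ∑_j exp (-ε * dist i₀ j)`; equivalently, under the uniform input
distribution the a posteriori min-entropy satisfies
`H∞(V|B) ≥ -log₂ (1 / ∑_{d=0}^{δ} n_d * exp (-ε d))`. -/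
theorem dp_min_entropy_bound_vtPlus {V B : Type*} [Fintype V] [Fintype B]
    (G : SimpleGraph V) (hconn : G.Connected) (hvt : IsVTPlus G)
    (ε : ℝ) (hε : 0 < ε) (M : V → B → ℝ)
    (hnn : ∀ i b, 0 ≤ M i b) (hrow : ∀ i, ∑ b, M i b = 1)
    (hdp : ∀ i h, G.Adj i h → ∀ b, M i b ≤ Real.exp ε * M h b) :
    ∀ i₀ : V,
      (∑ b, ⨆ i, M i b) ≤
        (Fintype.card V : ℝ) / ∑ j, Real.exp (-ε * (G.dist i₀ j : ℝ)) ∧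
      -Real.logb 2 ((1 / (Fintype.card V : ℝ)) * ∑ b, ⨆ i, M i b) ≥
        -Real.logb 2 (1 / ∑ d ∈ Finset.range (G.diam + 1),
          (Nat.card {j : V // G.dist i₀ j = d} : ℝ) * Real.exp (-ε * (d : ℝ))) :=
  dp_min_entropy_bound_vtPlus_general G hconn hvt ε M hrow hdp
end

section
/- Fix u ≥ 1 and a finite set Val with v = |Val| ≥ 2, let Z be a finite set, let ε > 0, and let M : Val^u → Z → ℝ be a channel matrix satisfying ε-differential privacy with respect to the Hamming adjacency on Val^u. Then ∑_{z ∈ Z} max_{x ∈ Val^u} M x z ≤ (v · exp(ε) / (v − 1 + exp(ε)))^u. Equivalently, for every input distribution the min-entropy leakage satisfies I∞(X; Z) ≤ u · log₂(v · exp(ε) / (v − 1 + exp(ε))). -/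
/-!
Fix an output `z` and a maximiser `x₀` of the column `x ↦ M x z`. Walking from `x₀` to `x`
one coordinate at a time, differential privacy gives `M x₀ z ≤ e^{ε d(x₀, x)} M x z`, so
`M x₀ z · ∑_x e^{-ε d(x, x₀)} ≤ ∑_x M x z`. The weight sum factorises over the coordinates
as `(1 + (v - 1) e^{-ε})^u`, and summing over `z` the right-hand sides add up to the number
`v^u` of rows. Since `v / (1 + (v - 1) e^{-ε}) = v e^ε / (v - 1 + e^ε)`, this is the bound;
the logarithmic form follows because the sum of column maxima is at least one row sum, `1`.
-/

/-- The Hamming graph on `Fin u → Val`: two tuples are adjacent iff they differ in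
exactly one coordinate, i.e. their Hamming distance is `1`. -/
def hammingGraph (u : ℕ) (Val : Type*) [DecidableEq Val] :
    SimpleGraph (Fin u → Val) where
  Adj x y := hammingDist x y = 1
  symm := by
    constructor
    intro x y h
    rwa [hammingDist_comm]
  loopless := by
    constructor
    intro x h
    simp [hammingDist_self] at h

open Finset

section Update

variable {ι : Type*} [Fintype ι] [DecidableEq ι] {β : ι → Type*} [∀ i, DecidableEq (β i)]

theorem hammingDist_update_eq_one {x y : ∀ i, β i} {i : ι} (hi : x i ≠ y i) :
    hammingDist x (Function.update x i (y i)) = 1 := by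
  have : ({j | x j ≠ Function.update x i (y i) j} : Finset ι) = {i} := by
    ext j
    by_cases hj : j = i <;> simp [Function.update, hj, hi]
  rw [hammingDist, this, card_singleton]

theorem hammingDist_update_add_one {x y : ∀ i, β i} {i : ι} (hi : x i ≠ y i) :
    hammingDist (Function.update x i (y i)) y + 1 = hammingDist x y := by
  have herase : ({j | Function.update x i (y i) j ≠ y j} : Finset ι) =
      ({j | x j ≠ y j} : Finset ι).erase i := by
    ext j
    by_cases hj : j = i <;> simp [Function.update, hj]
  have hmem : i ∈ ({j | x j ≠ y j} : Finset ι) := by simp [hi]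
  rw [hammingDist, hammingDist, herase, card_erase_add_one hmem]

theorem le_pow_hammingDist_mul {R : Type*} [Semiring R] [PartialOrder R] [IsOrderedRing R]
    {f : (∀ i, β i) → R} {c : R} (hc : 0 ≤ c)
    (hf : ∀ x y, hammingDist x y = 1 → f x ≤ c * f y) (x y : ∀ i, β i) :
    f x ≤ c ^ hammingDist x y * f y := by
  induction hd : hammingDist x y generalizing x with
  | zero => simp [hammingDist_eq_zero.mp hd]
  | succ d ih =>
    obtain ⟨i, hi⟩ := Function.ne_iff.mp (hammingDist_ne_zero.mp (by rw [hd]; omega))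
    have hrest := ih (Function.update x i (y i)) (by have := hammingDist_update_add_one hi; omega)
    calc f x ≤ c * f (Function.update x i (y i)) := hf _ _ (hammingDist_update_eq_one hi)
      _ ≤ c * (c ^ d * f y) := mul_le_mul_of_nonneg_left hrest hc
      _ = c ^ (d + 1) * f y := by rw [pow_succ', mul_assoc]

end Update

theorem sum_pow_hammingDist {ι β R : Type*} [Fintype ι] [DecidableEq ι] [Fintype β]
    [DecidableEq β] [CommRing R] (t : R) (x₀ : ι → β) :
    ∑ x : ι → β, t ^ hammingDist x x₀ =
      (1 + (Fintype.card β - 1 : R) * t) ^ Fintype.card ι := by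
  have hcoord (b : β) :
      ∑ a : β, (if a = b then 1 else t) = 1 + (Fintype.card β - 1 : R) * t := by
    rw [← add_sum_erase _ _ (mem_univ b), if_pos rfl,
      sum_congr rfl fun a ha => if_neg (ne_of_mem_erase ha), sum_const,
      card_erase_of_mem (mem_univ b), card_univ, nsmul_eq_mul,
      Nat.cast_pred (Fintype.card_pos_iff.mpr ⟨b⟩)]
  calc ∑ x : ι → β, t ^ hammingDist x x₀
      = ∑ x : ι → β, ∏ i, (if x i = x₀ i then 1 else t) := by
        refine sum_congr rfl fun x _ => ?_
        rw [prod_ite, prod_const_one, one_mul, prod_const, hammingDist]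
    _ = ∏ i, ∑ a : β, (if a = x₀ i then 1 else t) :=
        (Fintype.prod_sum fun i a => if a = x₀ i then 1 else t).symm
    _ = _ := by rw [prod_congr rfl fun i _ => hcoord (x₀ i), prod_const, card_univ]

theorem iSup_mul_le_sum_of_hammingDist_eq_one {ι β : Type*} [Fintype ι] [DecidableEq ι]
    [Fintype β] [DecidableEq β] [Nonempty β] {f : (ι → β) → ℝ} {c : ℝ} (hc : 0 < c)
    (hf : ∀ x y, hammingDist x y = 1 → f x ≤ c * f y) :
    (⨆ x, f x) * (1 + (Fintype.card β - 1 : ℝ) * c⁻¹) ^ Fintype.card ι ≤ ∑ x, f x := by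
  obtain ⟨x₀, hx₀⟩ := Finite.exists_max f
  have hsup : ⨆ x, f x = f x₀ :=
    le_antisymm (ciSup_le hx₀) (le_ciSup (Finite.bddAbove_range f) x₀)
  rw [hsup, ← sum_pow_hammingDist c⁻¹ x₀, mul_sum]
  refine sum_le_sum fun x _ => ?_
  calc f x₀ * c⁻¹ ^ hammingDist x x₀
      ≤ c ^ hammingDist x x₀ * f x * c⁻¹ ^ hammingDist x x₀ := by
        rw [hammingDist_comm]
        exact mul_le_mul_of_nonneg_right (le_pow_hammingDist_mul hc.le hf x₀ x) (by positivity)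
    _ = f x := by
        rw [inv_pow, mul_right_comm, mul_inv_cancel₀ (pow_ne_zero _ hc.ne'), one_mul]

theorem sum_iSup_mul_le_card_pow {ι β Z : Type*} [Fintype ι] [DecidableEq ι] [Fintype β]
    [DecidableEq β] [Nonempty β] [Fintype Z] {M : (ι → β) → Z → ℝ} {c : ℝ} (hc : 0 < c)
    (hrow : ∀ x, ∑ z, M x z = 1)
    (hM : ∀ x y, hammingDist x y = 1 → ∀ z, M x z ≤ c * M y z) :
    (∑ z, ⨆ x, M x z) * (1 + (Fintype.card β - 1 : ℝ) * c⁻¹) ^ Fintype.card ι ≤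
      (Fintype.card β : ℝ) ^ Fintype.card ι := calc
  _ ≤ ∑ z, ∑ x, M x z := by
    rw [sum_mul]
    exact sum_le_sum fun z _ => iSup_mul_le_sum_of_hammingDist_eq_one hc fun x y h => hM x y h z
  _ = (Fintype.card β : ℝ) ^ Fintype.card ι := by
    rw [sum_comm]
    simp [hrow]

theorem one_le_sum_iSup {α Z : Type*} [Finite α] [Nonempty α] [Fintype Z] {M : α → Z → ℝ}
    (hrow : ∀ x, ∑ z, M x z = 1) : 1 ≤ ∑ z, ⨆ x, M x z := by
  inhabit α
  calc 1 = ∑ z, M default z := (hrow _).symm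
    _ ≤ ∑ z, ⨆ x, M x z :=
      sum_le_sum fun z _ => le_ciSup (f := fun x => M x z) (Finite.bddAbove_range _) _

theorem dp_leakage_bound_general (u : ℕ)
    (Val : Type*) [Fintype Val] [DecidableEq Val]
    (hv : 2 ≤ Fintype.card Val) {Z : Type*} [Fintype Z]
    (ε : ℝ) (M : (Fin u → Val) → Z → ℝ)
    (hrow : ∀ x, ∑ z, M x z = 1)
    (hdp : ∀ x x', (hammingGraph u Val).Adj x x' → ∀ z, M x z ≤ Real.exp ε * M x' z) :
    (∑ z, ⨆ x, M x z) ≤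
      ((Fintype.card Val : ℝ) * Real.exp ε /
        ((Fintype.card Val : ℝ) - 1 + Real.exp ε)) ^ u ∧
    Real.logb 2 (∑ z, ⨆ x, M x z) ≤
      (u : ℝ) * Real.logb 2 ((Fintype.card Val : ℝ) * Real.exp ε /
        ((Fintype.card Val : ℝ) - 1 + Real.exp ε)) := by
  have : Nonempty Val := Fintype.card_pos_iff.mp (by omega)
  set v : ℝ := (Fintype.card Val : ℝ)
  have hv1 : 1 ≤ v := Nat.one_le_cast.mpr (by omega)
  have he := Real.exp_pos ε
  have hS : 0 < 1 + (v - 1) * (Real.exp ε)⁻¹ :=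
    add_pos_of_pos_of_nonneg one_pos (mul_nonneg (by linarith) (inv_pos.mpr he).le)
  have hratio : v * Real.exp ε / (v - 1 + Real.exp ε) = v / (1 + (v - 1) * (Real.exp ε)⁻¹) := by
    field_simp
    ring
  have hbound : (∑ z, ⨆ x, M x z) ≤ (v * Real.exp ε / (v - 1 + Real.exp ε)) ^ u := by
    rw [hratio, div_pow, le_div_iff₀ (pow_pos hS u)]
    simpa using sum_iSup_mul_le_card_pow he hrow hdp
  refine ⟨hbound, ?_⟩
  rw [← Real.logb_pow]
  exact Real.logb_le_logb_of_le one_lt_two (by linarith [one_le_sum_iSup hrow]) hbound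

/-- **bound on the min-entropy leakage.** Let `M` be a channel matrix on
`Val^u × Z` satisfying `ε`-differential privacy with respect to the Hamming adjacency.
Then `∑_z max_x M x z ≤ (v * e^ε / (v - 1 + e^ε))^u`; equivalently, the min-entropy
leakage (which is maximized by the uniform input distribution, where it equals
`log₂ (∑_z max_x M x z)`) is at most `u * log₂ (v * e^ε / (v - 1 + e^ε))`. -/
theorem dp_leakage_bound (u : ℕ) (hu : 1 ≤ u)
    (Val : Type*) [Fintype Val] [DecidableEq Val]
    (hv : 2 ≤ Fintype.card Val) {Z : Type*} [Fintype Z]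
    (ε : ℝ) (hε : 0 < ε) (M : (Fin u → Val) → Z → ℝ)
    (hnn : ∀ x z, 0 ≤ M x z) (hrow : ∀ x, ∑ z, M x z = 1)
    (hdp : ∀ x x', (hammingGraph u Val).Adj x x' → ∀ z, M x z ≤ Real.exp ε * M x' z) :
    (∑ z, ⨆ x, M x z) ≤
      ((Fintype.card Val : ℝ) * Real.exp ε /
        ((Fintype.card Val : ℝ) - 1 + Real.exp ε)) ^ u ∧
    Real.logb 2 (∑ z, ⨆ x, M x z) ≤
      (u : ℝ) * Real.logb 2 ((Fintype.card Val : ℝ) * Real.exp ε /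
        ((Fintype.card Val : ℝ) - 1 + Real.exp ε)) :=
  dp_leakage_bound_general u Val hv ε M hrow hdp
end
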